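/- In a pseudo hoop M satisfying x² ⊙ y² ≤ y ⊙ x for all x, y: for any filter F and any element a ∈ M, the set {x ∈ M : x ≥ f ⊙ aⁿ for some n ∈ ℕ and f ∈ F} is a filter, and it equals the filter generated by F ∪ {a}; the same holds for {x : x ≥ aⁿ ⊙ f}. -/
import Mathlib


universe u

structure PseudoHoop (M : Type u) where
  mul : M → M → M
  one : M
  imp : M → M → M
  rimp : M → M → M
  mul_one : ∀ x, mul x one = x
  one_mul : ∀ x, mul one x = x
  imp_self : ∀ x, imp x x = one
  rimp_self : ∀ x, rimp x x = one
  mul_imp : ∀ x y z, imp (mul x y) z = imp x (imp y z)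
  mul_rimp : ∀ x y z, rimp (mul x y) z = rimp y (rimp x z)
  div1 : ∀ x y, mul (imp x y) x = mul (imp y x) y
  div2 : ∀ x y, mul (imp x y) x = mul x (rimp x y)
  div3 : ∀ x y, mul x (rimp x y) = mul y (rimp y x)

namespace PseudoHoop

variable {M : Type u} (H : PseudoHoop M)

/-- The induced order: x ≤ y iff x → y = 1. -/
def le (x y : M) : Prop := H.imp x y = H.one

/-- The derived meet: x ∧ y = (x → y) ⊙ x. -/
def meet (x y : M) : M := H.mul (H.imp x y) x

/-- Powers: a^0 = 1, a^(n+1) = a^n ⊙ a. -/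
def pow (a : M) : ℕ → M
  | 0 => H.one
  | n + 1 => H.mul (pow a n) a

/-- j is the least upper bound of x and y. -/
def IsJoin (x y j : M) : Prop :=
  H.le x j ∧ H.le y j ∧ ∀ c, H.le x c → H.le y c → H.le j c

/-- Prelinearity: (x→y) ∨ (y→x) and (x⇝y) ∨ (y⇝x) exist and equal 1. -/
def Prelinear : Prop :=
  ∀ x y, H.IsJoin (H.imp x y) (H.imp y x) H.one ∧ H.IsJoin (H.rimp x y) (H.rimp y x) H.one

/-- Basic pseudo hoop. -/
def Basic : Prop :=
  (∀ x y z, H.le (H.imp (H.imp x y) z) (H.imp (H.imp (H.imp y x) z) z)) ∧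
  (∀ x y z, H.le (H.rimp (H.rimp x y) z) (H.rimp (H.rimp (H.rimp y x) z) z))

/-- Filters: contain 1, closed under ⊙ and upward closed. -/
def IsFilter (F : Set M) : Prop :=
  H.one ∈ F ∧ (∀ x ∈ F, ∀ y ∈ F, H.mul x y ∈ F) ∧ (∀ x ∈ F, ∀ y, H.le x y → y ∈ F)

/-- Filter generated by a set. -/
def filterGen (S : Set M) : Set M := ⋂₀ {F | H.IsFilter F ∧ S ⊆ F}

/-- Prime filter. -/
def IsPrime (F : Set M) : Prop :=
  H.IsFilter F ∧
    ∀ F₁ F₂, H.IsFilter F₁ → H.IsFilter F₂ → F₁ ∩ F₂ ⊆ F → F₁ ⊆ F ∨ F₂ ⊆ F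

/-- V is a value of g: a filter maximal with respect to not containing g. -/
def IsValueOf (V : Set M) (g : M) : Prop :=
  H.IsFilter V ∧ g ∉ V ∧ ∀ W, H.IsFilter W → V ⊆ W → g ∉ W → W = V

/-- V is a value of M: a value of some g ≠ 1. -/
def IsValue (V : Set M) : Prop := ∃ g, g ≠ H.one ∧ H.IsValueOf V g

end PseudoHoop

namespace PseudoHoop

variable {M : Type u} (H : PseudoHoop M)

theorem my_le_refl (x : M) : H.le x x := H.imp_self x

theorem my_antisymm {x y : M} (h1 : H.le x y) (h2 : H.le y x) : x = y := by
  have h1' : H.imp x y = H.one := h1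
  have h2' : H.imp y x = H.one := h2
  have h := H.div1 x y
  rw [h1', h2', H.one_mul, H.one_mul] at h
  exact h

theorem imp_one_left (x : M) : H.imp H.one x = x := by
  have star : ∀ y z : M, H.imp y z = H.imp H.one (H.imp y z) := by
    intro y z; rw [← H.mul_imp, H.one_mul]
  have hA : ∀ x : M, H.imp H.one x = H.mul (H.imp x H.one) x := by
    intro x; have h := H.div1 H.one x; rw [H.mul_one] at h; exact h
  have h3 : ∀ x : M, H.imp (H.imp H.one x) H.one = H.one := by
    intro x; rw [hA, H.mul_imp, H.imp_self]
  have h4 : ∀ x : M, H.imp (H.imp x H.one) H.one = H.one := by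
    intro x; rw [star x H.one]; exact h3 _
  have h5 : H.le (H.imp H.one x) x := by
    show H.imp _ _ = H.one
    rw [hA, H.mul_imp, H.imp_self]; exact h4 x
  have h6 : H.le x (H.imp H.one x) := by
    show H.imp _ _ = H.one
    rw [← H.mul_imp, H.mul_one, H.imp_self]
  exact H.my_antisymm h5 h6

theorem rimp_one_left (x : M) : H.rimp H.one x = x := by
  have h := H.div2 H.one x
  rw [H.mul_one, H.one_mul, H.imp_one_left] at h
  exact h.symm

theorem E1 (x : M) : H.mul (H.imp x H.one) x = x := by
  rw [H.div2, H.div3, H.one_mul, H.rimp_one_left]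

theorem E2 (x : M) : H.mul x (H.rimp x H.one) = x := by
  rw [H.div3, H.one_mul, H.rimp_one_left]

theorem imp_one (x : M) : H.imp x H.one = H.one := by
  have h := congrArg (fun t => H.imp t H.one) (H.E1 x)
  simp only [H.mul_imp, H.imp_self] at h
  exact h.symm

theorem rimp_one (x : M) : H.rimp x H.one = H.one := by
  have h := congrArg (fun t => H.rimp t H.one) (H.E2 x)
  simp only [H.mul_rimp, H.rimp_self] at h
  exact h.symm

theorem my_le_one (x : M) : H.le x H.one := H.imp_one x

theorem rimp_eq_one_of_le {x y : M} (h : H.le x y) : H.rimp x y = H.one := by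
  have h' : H.imp x y = H.one := h
  have e1 : H.mul y (H.rimp y x) = x := by
    rw [← H.div3, ← H.div2, h', H.one_mul]
  have h2 := congrArg (fun t => H.rimp t y) e1
  simp only [H.mul_rimp, H.rimp_self, H.rimp_one] at h2
  exact h2.symm

theorem le_of_rimp {x y : M} (h : H.rimp x y = H.one) : H.le x y := by
  have e1 : H.mul (H.imp y x) y = x := by
    rw [← H.div1, H.div2, h, H.mul_one]
  have h2 := congrArg (fun t => H.imp t y) e1
  simp only [H.mul_imp, H.imp_self, H.imp_one] at h2
  exact h2.symm

theorem le_iff_rimp {x y : M} : H.le x y ↔ H.rimp x y = H.one :=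
  ⟨H.rimp_eq_one_of_le, H.le_of_rimp⟩

theorem my_le_trans {x y z : M} (h1 : H.le x y) (h2 : H.le y z) : H.le x z := by
  have h1' : H.imp x y = H.one := h1
  have h2' : H.imp y z = H.one := h2
  have e1 : H.mul (H.imp y x) y = x := by
    rw [← H.div1, h1', H.one_mul]
  have h3 := congrArg (fun t => H.imp t z) e1
  simp only [H.mul_imp, h2', H.imp_one] at h3
  exact h3.symm

theorem res1 {x y z : M} : H.le (H.mul x y) z ↔ H.le x (H.imp y z) := by
  unfold PseudoHoop.le
  rw [H.mul_imp]

theorem res2 {x y z : M} : H.le (H.mul x y) z ↔ H.le y (H.rimp x z) := by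
  rw [H.le_iff_rimp, H.mul_rimp, ← H.le_iff_rimp]

theorem my_mul_le_mul {a b c d : M} (h1 : H.le a b) (h2 : H.le c d) :
    H.le (H.mul a c) (H.mul b d) := by
  have s1 : H.le (H.mul a c) (H.mul b c) :=
    H.res1.mpr (H.my_le_trans h1 (H.res1.mp (H.my_le_refl (H.mul b c))))
  have s2 : H.le (H.mul b c) (H.mul b d) :=
    H.res2.mpr (H.my_le_trans h2 (H.res2.mp (H.my_le_refl (H.mul b d))))
  exact H.my_le_trans s1 s2

theorem my_assoc (x y z : M) : H.mul (H.mul x y) z = H.mul x (H.mul y z) := by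
  have key : ∀ w, H.imp (H.mul (H.mul x y) z) w = H.imp (H.mul x (H.mul y z)) w := by
    intro w; rw [H.mul_imp, H.mul_imp, H.mul_imp, H.mul_imp]
  apply H.my_antisymm
  · show H.imp _ _ = H.one; rw [key]; exact H.imp_self _
  · show H.imp _ _ = H.one; rw [← key]; exact H.imp_self _

theorem my_pow_add (a : M) (n m : ℕ) :
    H.pow a (n + m) = H.mul (H.pow a n) (H.pow a m) := by
  induction m with
  | zero => simp [PseudoHoop.pow, H.mul_one]
  | succ k ih =>
    show H.pow a (n + k + 1) = _
    simp only [PseudoHoop.pow, ih, H.my_assoc]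

theorem my_pow_two (a : M) : H.pow a 2 = H.mul a a := by
  show H.mul (H.mul (H.pow a 0) a) a = _
  show H.mul (H.mul H.one a) a = _
  rw [H.one_mul]

theorem pow_mem {G : Set M} (hG : H.IsFilter G) {a : M} (ha : a ∈ G) (n : ℕ) :
    H.pow a n ∈ G := by
  induction n with
  | zero => exact hG.1
  | succ k ih => exact hG.2.1 _ ih _ ha

theorem filterGen_eq {S T : Set M} (hS : H.IsFilter S) (hT : T ⊆ S)
    (hmin : ∀ G, H.IsFilter G → T ⊆ G → S ⊆ G) : S = H.filterGen T := by
  apply Set.Subset.antisymm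
  · intro x hx
    rw [PseudoHoop.filterGen, Set.mem_sInter]
    rintro G ⟨hG1, hG2⟩
    exact hmin G hG1 hG2 hx
  · exact Set.sInter_subset_of_mem ⟨hS, hT⟩

end PseudoHoop

theorem pseudoHoop_filter_generated_by_filter_and_element {M : Type u} (H : PseudoHoop M)
    (hineq : ∀ x y : M, H.le (H.mul (H.pow x 2) (H.pow y 2)) (H.mul y x))
    (F : Set M) (hF : H.IsFilter F) (a : M) :
    H.IsFilter {x | ∃ f ∈ F, ∃ n : ℕ, H.le (H.mul f (H.pow a n)) x} ∧
    {x | ∃ f ∈ F, ∃ n : ℕ, H.le (H.mul f (H.pow a n)) x} = H.filterGen (F ∪ {a}) ∧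
    H.IsFilter {x | ∃ f ∈ F, ∃ n : ℕ, H.le (H.mul (H.pow a n) f) x} ∧
    {x | ∃ f ∈ F, ∃ n : ℕ, H.le (H.mul (H.pow a n) f) x} = H.filterGen (F ∪ {a}) := by
  set S₁ := {x | ∃ f ∈ F, ∃ n : ℕ, H.le (H.mul f (H.pow a n)) x} with hS₁def
  set S₂ := {x | ∃ f ∈ F, ∃ n : ℕ, H.le (H.mul (H.pow a n) f) x} with hS₂def
  -- S₁ is a filter
  have hFil₁ : H.IsFilter S₁ := by
    refine ⟨⟨H.one, hF.1, 0, ?_⟩, ?_, ?_⟩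
    · show H.le (H.mul H.one (H.pow a 0)) H.one
      rw [show H.pow a 0 = H.one from rfl, H.one_mul]
      exact H.my_le_refl _
    · rintro x ⟨f₁, hf₁, n, hx⟩ y ⟨f₂, hf₂, m, hy⟩
      refine ⟨H.mul f₁ (H.mul f₂ f₂), hF.2.1 _ hf₁ _ (hF.2.1 _ hf₂ _ hf₂),
        n + (n + m), ?_⟩
      set A := H.pow a n
      set B := H.pow a m
      have hpow : H.pow a (n + (n + m)) = H.mul A (H.mul A B) := by
        rw [H.my_pow_add, H.my_pow_add]
      rw [hpow]
      have step1 : H.le (H.mul (H.mul f₂ f₂) (H.mul A A)) (H.mul A f₂) := by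
        have h := hineq f₂ A
        rwa [H.my_pow_two, H.my_pow_two] at h
      have eq1 : H.mul (H.mul f₁ (H.mul f₂ f₂)) (H.mul A (H.mul A B)) =
          H.mul f₁ (H.mul (H.mul (H.mul f₂ f₂) (H.mul A A)) B) := by
        simp only [H.my_assoc]
      have eq2 : H.mul f₁ (H.mul (H.mul A f₂) B) = H.mul (H.mul f₁ A) (H.mul f₂ B) := by
        simp only [H.my_assoc]
      rw [eq1]
      refine H.my_le_trans (H.my_mul_le_mul (H.my_le_refl f₁)
        (H.my_mul_le_mul step1 (H.my_le_refl B))) ?_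
      rw [eq2]
      exact H.my_mul_le_mul hx hy
    · rintro x ⟨f, hf, n, hx⟩ y hxy
      exact ⟨f, hf, n, H.my_le_trans hx hxy⟩
  -- S₂ is a filter
  have hFil₂ : H.IsFilter S₂ := by
    refine ⟨⟨H.one, hF.1, 0, ?_⟩, ?_, ?_⟩
    · show H.le (H.mul (H.pow a 0) H.one) H.one
      rw [H.mul_one]
      exact H.my_le_refl _
    · rintro x ⟨f₁, hf₁, n, hx⟩ y ⟨f₂, hf₂, m, hy⟩
      refine ⟨H.mul (H.mul f₁ f₁) f₂, hF.2.1 _ (hF.2.1 _ hf₁ _ hf₁) _ hf₂,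
        n + (m + m), ?_⟩
      set A := H.pow a n
      set B := H.pow a m
      have hpow : H.pow a (n + (m + m)) = H.mul A (H.mul B B) := by
        rw [H.my_pow_add, H.my_pow_add]
      rw [hpow]
      have step1 : H.le (H.mul (H.mul B B) (H.mul f₁ f₁)) (H.mul f₁ B) := by
        have h := hineq B f₁
        rwa [H.my_pow_two, H.my_pow_two] at h
      have eq1 : H.mul (H.mul A (H.mul B B)) (H.mul (H.mul f₁ f₁) f₂) =
          H.mul A (H.mul (H.mul (H.mul B B) (H.mul f₁ f₁)) f₂) := by
        simp only [H.my_assoc]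
      have eq2 : H.mul A (H.mul (H.mul f₁ B) f₂) = H.mul (H.mul A f₁) (H.mul B f₂) := by
        simp only [H.my_assoc]
      rw [eq1]
      refine H.my_le_trans (H.my_mul_le_mul (H.my_le_refl A)
        (H.my_mul_le_mul step1 (H.my_le_refl f₂))) ?_
      rw [eq2]
      exact H.my_mul_le_mul hx hy
    · rintro x ⟨f, hf, n, hx⟩ y hxy
      exact ⟨f, hf, n, H.my_le_trans hx hxy⟩
  have ha_pow1 : H.pow a 1 = a := by
    show H.mul (H.pow a 0) a = a
    show H.mul H.one a = a
    exact H.one_mul a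
  -- S₁ contains F ∪ {a}
  have hsub₁ : F ∪ {a} ⊆ S₁ := by
    rintro x (hx | hx)
    · refine ⟨x, hx, 0, ?_⟩
      show H.le (H.mul x (H.pow a 0)) x
      rw [show H.pow a 0 = H.one from rfl, H.mul_one]
      exact H.my_le_refl _
    · rcases hx with rfl
      refine ⟨H.one, hF.1, 1, ?_⟩
      rw [ha_pow1, H.one_mul]
      exact H.my_le_refl _
  have hsub₂ : F ∪ {a} ⊆ S₂ := by
    rintro x (hx | hx)
    · refine ⟨x, hx, 0, ?_⟩
      show H.le (H.mul (H.pow a 0) x) x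
      rw [show H.pow a 0 = H.one from rfl, H.one_mul]
      exact H.my_le_refl _
    · rcases hx with rfl
      refine ⟨H.one, hF.1, 1, ?_⟩
      rw [ha_pow1, H.mul_one]
      exact H.my_le_refl _
  have hmin₁ : ∀ G, H.IsFilter G → F ∪ {a} ⊆ G → S₁ ⊆ G := by
    rintro G hG hTG x ⟨f, hf, n, hx⟩
    have hfG : f ∈ G := hTG (Or.inl hf)
    have haG : a ∈ G := hTG (Or.inr rfl)
    exact hG.2.2 _ (hG.2.1 _ hfG _ (H.pow_mem hG haG n)) _ hx
  have hmin₂ : ∀ G, H.IsFilter G → F ∪ {a} ⊆ G → S₂ ⊆ G := by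
    rintro G hG hTG x ⟨f, hf, n, hx⟩
    have hfG : f ∈ G := hTG (Or.inl hf)
    have haG : a ∈ G := hTG (Or.inr rfl)
    exact hG.2.2 _ (hG.2.1 _ (H.pow_mem hG haG n) _ hfG) _ hx
  exact ⟨hFil₁, H.filterGen_eq hFil₁ hsub₁ hmin₁, hFil₂, H.filterGen_eq hFil₂ hsub₂ hmin₂⟩
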